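/- In the level-3 Sierpi\'nski carpet graph $\Gamma_3$, the graph distance between $(0,4)$ and $(9,4)$ is strictly greater than the $\ell_1$ distance 9; in fact it equals 11. -/

import Mathlib

/-- ℓ¹ distance on ℤ². -/
def l1 (u v : ℤ × ℤ) : ℕ := (u.1 - v.1).natAbs + (u.2 - v.2).natAbs

/-- The grid graph on ℤ². -/
def gridGraph : SimpleGraph (ℤ × ℤ) where
  Adj u v := l1 u v = 1
  symm := ⟨by intro u v h; unfold l1 at *; omega⟩
  loopless := ⟨by intro u h; unfold l1 at h; omega⟩

/-- A lattice point is a vertex of the level-`n` discrete Sierpiński carpet. -/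
def carpetVertex (n : ℕ) (p : ℤ × ℤ) : Prop :=
  0 ≤ p.1 ∧ p.1 ≤ 3 ^ (n - 1) ∧ 0 ≤ p.2 ∧ p.2 ≤ 3 ^ (n - 1) ∧
  ∀ s < n - 1, ¬ ((3:ℤ)^s < p.1 % 3^(s+1) ∧ p.1 % 3^(s+1) < 2*3^s ∧
      (3:ℤ)^s < p.2 % 3^(s+1) ∧ p.2 % 3^(s+1) < 2*3^s)

instance (n : ℕ) : DecidablePred (carpetVertex n) := fun p => by
  unfold carpetVertex; infer_instance

/-- The level-`n` Sierpiński carpet graph, as a graph on ℤ². -/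
def carpetGraph (n : ℕ) : SimpleGraph (ℤ × ℤ) where
  Adj u v := carpetVertex n u ∧ carpetVertex n v ∧ l1 u v = 1
  symm := ⟨by rintro u v ⟨h1, h2, h3⟩; exact ⟨h2, h1, by unfold l1 at *; omega⟩⟩
  loopless := ⟨by rintro u ⟨-, -, h⟩; unfold l1 at h; omega⟩

/-- The vertex set of the level-`n` carpet graph. -/
noncomputable def carpetVerts (n : ℕ) : Finset (ℤ × ℤ) :=
  ((Finset.Icc (0:ℤ) (3^(n-1))) ×ˢ (Finset.Icc (0:ℤ) (3^(n-1)))).filter (carpetVertex n)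

/-!
Every edge of the carpet graph changes the ℓ¹ distance to a fixed point by exactly one, so a
walk from `(0,4)` to `(9,4)` has odd length at least `9`. A walk of length exactly `9` is an
ℓ¹-geodesic: its vertex after `k` steps lies at ℓ¹ distance `k` from the start and `9 - k` from
the end, which for `k = 4` forces the point `(4,4)` inside the removed central square. Going
around that square along the row `y = 3` gives a walk of length `11`.
-/

lemma l1_triangle (u v w : ℤ × ℤ) : l1 u w ≤ l1 u v + l1 v w := by
  unfold l1; omega

lemma carpetGraph_le_gridGraph (n : ℕ) : carpetGraph n ≤ gridGraph :=
  fun _ _ h => h.2.2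

section GridSubgraph

variable {G : SimpleGraph (ℤ × ℤ)} (hG : G ≤ gridGraph)
include hG

lemma l1_le_length_of_le_gridGraph {u v : ℤ × ℤ} (p : G.Walk u v) : l1 u v ≤ p.length := by
  induction p with
  | nil => simp [l1]
  | cons h _ ih =>
    have := hG h
    simp only [gridGraph, SimpleGraph.Walk.length_cons, l1] at *
    omega

lemma length_mod_two_of_le_gridGraph {u v : ℤ × ℤ} (p : G.Walk u v) :
    p.length % 2 = l1 u v % 2 := by
  induction p with
  | nil => simp [l1]
  | cons h _ ih =>
    have := hG h
    simp only [gridGraph, SimpleGraph.Walk.length_cons, l1] at *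
    omega

lemma l1_getVert_of_length_eq_l1 {u v : ℤ × ℤ} (p : G.Walk u v) (hp : p.length = l1 u v)
    {k : ℕ} (hk : k ≤ p.length) :
    l1 u (p.getVert k) = k ∧ l1 (p.getVert k) v = p.length - k := by
  have hstart := l1_le_length_of_le_gridGraph hG (p.take k)
  have hend := l1_le_length_of_le_gridGraph hG (p.drop k)
  have htriangle := l1_triangle u (p.getVert k) v
  rw [SimpleGraph.Walk.take_length, min_eq_left hk] at hstart
  rw [SimpleGraph.Walk.drop_length] at hend
  omega

end GridSubgraph

lemma carpetVertex_getVert {n : ℕ} {u v : ℤ × ℤ} (p : (carpetGraph n).Walk u v) {k : ℕ}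
    (hk : k < p.length) : carpetVertex n (p.getVert k) :=
  (p.adj_getVert_succ hk).1

instance (n : ℕ) : DecidableRel (carpetGraph n).Adj := fun u v =>
  inferInstanceAs (Decidable (carpetVertex n u ∧ carpetVertex n v ∧ l1 u v = 1))

def carpetThreeDetour : (carpetGraph 3).Walk (0, 4) (9, 4) :=
  .cons (v := (1, 4)) (by decide) <| .cons (v := (2, 4)) (by decide) <|
  .cons (v := (3, 4)) (by decide) <| .cons (v := (3, 3)) (by decide) <|
  .cons (v := (4, 3)) (by decide) <| .cons (v := (5, 3)) (by decide) <|
  .cons (v := (6, 3)) (by decide) <| .cons (v := (6, 4)) (by decide) <|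
  .cons (v := (7, 4)) (by decide) <| .cons (v := (8, 4)) (by decide) <|
  .cons (by decide) .nil

lemma carpetThreeDetour_length : carpetThreeDetour.length = 11 := rfl

lemma carpetGraph_three_walk_length_ne_nine (p : (carpetGraph 3).Walk (0, 4) (9, 4)) :
    p.length ≠ 9 := by
  intro hp
  have hl1 : l1 (0, 4) (9, 4) = 9 := by decide
  obtain ⟨hstart, hend⟩ :=
    l1_getVert_of_length_eq_l1 (carpetGraph_le_gridGraph 3) p (hp.trans hl1.symm)
      (k := 4) (by omega)
  have hcentre : p.getVert 4 = (4, 4) := by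
    simp only [l1, hp] at hstart hend
    ext <;> omega
  have hvert := carpetVertex_getVert p (k := 4) (by omega)
  rw [hcentre] at hvert
  exact absurd hvert (by decide)

/-- In the level-3 carpet graph, the distance between (0,4) and (9,4) exceeds the
ℓ¹ distance 9; in fact it equals 11. -/
theorem carpet3_dist :
    9 < (carpetGraph 3).dist ((0:ℤ), (4:ℤ)) ((9:ℤ), (4:ℤ)) ∧
    (carpetGraph 3).dist ((0:ℤ), (4:ℤ)) ((9:ℤ), (4:ℤ)) = 11 ∧
    l1 ((0:ℤ), (4:ℤ)) ((9:ℤ), (4:ℤ)) = 9 := by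
  have hl1 : l1 (0, 4) (9, 4) = 9 := by decide
  have hupper : (carpetGraph 3).dist (0, 4) (9, 4) ≤ 11 :=
    carpetThreeDetour_length ▸ SimpleGraph.dist_le carpetThreeDetour
  have hreach : (carpetGraph 3).Reachable (0, 4) (9, 4) := ⟨carpetThreeDetour⟩
  obtain ⟨p, hp⟩ := hreach.exists_walk_length_eq_dist
  have hlower := l1_le_length_of_le_gridGraph (carpetGraph_le_gridGraph 3) p
  have hparity := length_mod_two_of_le_gridGraph (carpetGraph_le_gridGraph 3) p
  have hne := carpetGraph_three_walk_length_ne_nine p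
  exact ⟨by omega, by omega, hl1⟩
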